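/- arXiv:2408.05601 — 2 statements merged into one kernel-verified Lean document; each statement's English description precedes it below -/
import Mathlib

section
/- For a winning path of length k on an n×n Hex board with t wasted triangles, the identity 4(k−1) + t = 2(n+1)(n−1) holds; equivalently k = (n²+1)/2 − t/4. -/
/-- Hex adjacency on integer coordinates. -/
def HexAdj (a b : ℤ × ℤ) : Prop :=
  (b.1 - a.1, b.2 - a.2) ∈
    ({(1,0), (-1,0), (0,1), (0,-1), (1,-1), (-1,1)} : Set (ℤ × ℤ))

/-- Cell of the n×n Hex board. -/
def OnBoard (n : ℕ) (a : ℤ × ℤ) : Prop :=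
  1 ≤ a.1 ∧ a.1 ≤ (n : ℤ) ∧ 1 ≤ a.2 ∧ a.2 ≤ (n : ℤ)

/-- A winning connection for Black: a set of board cells containing a chain of
pairwise-adjacent cells from a cell in the top row (y = 1) to a cell in the
bottom row (y = n). -/
def IsWinningConnection (n : ℕ) (S : Finset (ℤ × ℤ)) : Prop :=
  (∀ c ∈ S, OnBoard n c) ∧
  ∃ p : List (ℤ × ℤ), ∃ hp : p ≠ [],
    (∀ c ∈ p, c ∈ S) ∧ List.Chain' HexAdj p ∧
    (p.head hp).2 = 1 ∧ (p.getLast hp).2 = (n : ℤ)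

/-- A winning path: a minimal winning connection. -/
def IsWinningPath (n : ℕ) (S : Finset (ℤ × ℤ)) : Prop :=
  IsWinningConnection n S ∧ ∀ T ⊂ S, ¬ IsWinningConnection n T

/-- Cell of the board extended by the empty columns x = 0 and x = n+1. -/
def OnExtBoard (n : ℕ) (a : ℤ × ℤ) : Prop :=
  0 ≤ a.1 ∧ a.1 ≤ (n : ℤ) + 1 ∧ 1 ≤ a.2 ∧ a.2 ≤ (n : ℤ)

/-- A unit triangle of the extended grid: three mutually hex-adjacent positions. -/
def IsUnitTriangle (n : ℕ) (T : Finset (ℤ × ℤ)) : Prop :=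
  T.card = 3 ∧ (∀ a ∈ T, OnExtBoard n a) ∧
    ∀ a ∈ T, ∀ b ∈ T, a ≠ b → HexAdj a b

/-- Number of wasted triangles: unit triangles with no vertex in S. -/
noncomputable def wastedCount (n : ℕ) (S : Finset (ℤ × ℤ)) : ℕ :=
  Set.ncard {T : Finset (ℤ × ℤ) | IsUnitTriangle n T ∧ ∀ a ∈ T, a ∉ S}

/-!
Take a shortest chain `f 0, …, f (k - 1)` of adjacent cells of `S` from row `1` to row `n`.
Minimality of `S` forces `S` to consist exactly of these cells, and shortness makes the chain
injective and chordless, with only its first cell in row `1` and only its last cell in row `n`.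
Now count the unit triangles touching `S`, adding the cells one at a time. A board cell lies in
six unit triangles, three if it is in row `1` or row `n` (both if `n = 1`, giving none). By
chordlessness the triangles shared by a new cell and the earlier ones are exactly the two on its
edge with the previous cell. So the cells add `3, 4, …, 4, 1` new triangles, `4 k - 4` in all,
out of the `2 (n + 1) (n - 1)` unit triangles; the others are wasted.
-/

section Crossing

variable {α : Type*} {r : α → α → Prop} {P Q : α → Prop} {S : Set α} {k : ℕ} {f : ℕ → α}

structure IsCrossing (r : α → α → Prop) (P Q : α → Prop) (S : Set α) (k : ℕ) (f : ℕ → α) :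
    Prop where
  pos : 0 < k
  mem : ∀ i < k, f i ∈ S
  adj : ∀ i < k - 1, r (f i) (f (i + 1))
  head : P (f 0)
  last : Q (f (k - 1))

namespace IsCrossing

theorem truncate (h : IsCrossing r P Q S k f) {s : ℕ} (hs : s < k) (hQ : Q (f s)) :
    IsCrossing r P Q S (s + 1) f where
  pos := s.succ_pos
  mem i hi := h.mem i (by omega)
  adj i hi := h.adj i (by omega)
  head := h.head
  last := hQ

theorem drop (h : IsCrossing r P Q S k f) {j : ℕ} (hj : j < k) (hP : P (f j)) :
    IsCrossing r P Q S (k - j) (fun i => f (i + j)) where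
  pos := by omega
  mem i hi := h.mem _ (by omega)
  adj i hi := by simpa only [Nat.add_right_comm i 1 j] using h.adj (i + j) (by omega)
  head := by simpa using hP
  last := by simpa only [show k - j - 1 + j = k - 1 by omega] using h.last

theorem splice (h : IsCrossing r P Q S k f) {s t : ℕ} (hst : s < t) (ht : t < k)
    (hr : r (f s) (f t)) :
    IsCrossing r P Q S (k - (t - s - 1))
      (fun i => if i ≤ s then f i else f (i + (t - s - 1))) where
  pos := by omega
  mem i hi := by split_ifs <;> exact h.mem _ (by omega)
  adj i hi := by
    rcases lt_trichotomy i s with his | rfl | his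
    · simpa [his.le, Nat.succ_le_of_lt his] using h.adj i (by omega)
    · simpa [show i + 1 + (t - i - 1) = t by omega] using hr
    · simpa [show ¬ i ≤ s by omega, show ¬ i < s by omega,
        show i + 1 + (t - s - 1) = i + (t - s - 1) + 1 by omega]
        using h.adj (i + (t - s - 1)) (by omega)
  head := by simpa using h.head
  last := by simpa [show ¬ k - (t - s - 1) - 1 ≤ s by omega,
    show k - (t - s - 1) - 1 + (t - s - 1) = k - 1 by omega] using h.last

end IsCrossing

structure IsShortestCrossing (r : α → α → Prop) (P Q : α → Prop) (S : Set α) (k : ℕ)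
    (f : ℕ → α) : Prop extends IsCrossing r P Q S k f where
  le : ∀ m g, IsCrossing r P Q S m g → k ≤ m

theorem IsCrossing.exists_isShortestCrossing (h : IsCrossing r P Q S k f) :
    ∃ k f, IsShortestCrossing r P Q S k f := by
  classical
  have hex : ∃ k f, IsCrossing r P Q S k f := ⟨k, f, h⟩
  obtain ⟨f, hf⟩ := Nat.find_spec hex
  exact ⟨_, f, hf, fun m g hg => Nat.find_min' hex ⟨g, hg⟩⟩

namespace IsShortestCrossing

theorem head_iff (h : IsShortestCrossing r P Q S k f) {i : ℕ} (hi : i < k) :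
    P (f i) ↔ i = 0 := by
  refine ⟨fun hP => ?_, by rintro rfl; exact h.head⟩
  have := h.le _ _ (h.drop hi hP)
  omega

theorem last_iff (h : IsShortestCrossing r P Q S k f) {i : ℕ} (hi : i < k) :
    Q (f i) ↔ i = k - 1 := by
  refine ⟨fun hQ => ?_, by rintro rfl; exact h.last⟩
  have := h.le _ _ (h.truncate hi hQ)
  omega

theorem not_adj (h : IsShortestCrossing r P Q S k f) {i j : ℕ} (hij : i + 1 < j) (hj : j < k) :
    ¬ r (f i) (f j) := fun hr => by
  have := h.le _ _ (h.splice (by omega) hj hr)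
  omega

theorem injOn (h : IsShortestCrossing r P Q S k f) : Set.InjOn f (Set.Iio k) := by
  rintro i (hi : i < k) j (hj : j < k) hfij
  by_contra hne
  wlog hij : i < j generalizing i j
  · exact this hj hi hfij.symm (Ne.symm hne) (by omega)
  by_cases hj' : j + 1 < k
  · exact h.not_adj (by omega) hj' (hfij ▸ h.adj j (by omega))
  · have := (h.last_iff hi).mp (hfij ▸ (show j = k - 1 by omega) ▸ h.last)
    omega

theorem card_image [DecidableEq α] (h : IsShortestCrossing r P Q S k f) :
    ((Finset.range k).image f).card = k := by
  rw [Finset.card_image_of_injOn (by simpa using h.injOn), Finset.card_range]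

end IsShortestCrossing

end Crossing

theorem isWinningConnection_iff {n : ℕ} {S : Finset (ℤ × ℤ)} :
    IsWinningConnection n S ↔ (∀ c ∈ S, OnBoard n c) ∧
      ∃ k f, IsCrossing HexAdj (·.2 = 1) (·.2 = (n : ℤ)) (S : Set (ℤ × ℤ)) k f := by
  refine and_congr_right fun _ => ⟨?_, ?_⟩
  · rintro ⟨p, hp, hpS, hchain, hhead, hlast⟩
    have hlen : 0 < p.length := List.length_pos_iff.mpr hp
    refine ⟨p.length, (p.getD · (0, 0)), hlen, fun i hi => ?_, fun i hi => ?_, ?_, ?_⟩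
    · simpa only [List.getD_eq_getElem _ _ hi, Finset.mem_coe] using hpS _ (List.getElem_mem hi)
    · simpa only [List.getD_eq_getElem _ _ (show i < p.length by omega),
        List.getD_eq_getElem _ _ (show i + 1 < p.length by omega)]
        using List.isChain_iff_getElem.mp hchain i (by omega)
    · simpa only [List.getD_eq_getElem _ _ hlen, List.head_eq_getElem_zero hp] using hhead
    · simpa only [List.getD_eq_getElem _ _ (Nat.sub_lt hlen one_pos), List.getLast_eq_getElem]
        using hlast
  · rintro ⟨k, f, hpos, hmem, hadj, hhead, hlast⟩
    have hne : (List.range k).map f ≠ [] := by simp; omega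
    refine ⟨(List.range k).map f, hne, by simpa using hmem, ?_, ?_, ?_⟩
    · exact (List.isChain_map f).mpr ((List.isChain_range _ k).mpr hadj)
    · simpa [List.head_eq_getElem_zero hne] using hhead
    · simpa [List.getLast_eq_getElem] using hlast

theorem IsWinningPath.eq_image {n : ℕ} {S : Finset (ℤ × ℤ)} (hS : IsWinningPath n S) {k : ℕ}
    {f : ℕ → ℤ × ℤ} (hf : IsCrossing HexAdj (·.2 = 1) (·.2 = (n : ℤ)) (S : Set (ℤ × ℤ)) k f) :
    S = (Finset.range k).image f := by
  have hsub : (Finset.range k).image f ⊆ S := by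
    simpa [Finset.image_subset_iff] using hf.mem
  refine (hsub.eq_or_ssubset.resolve_right fun hss => hS.2 _ hss ?_).symm
  refine isWinningConnection_iff.mpr ⟨fun c hc => hS.1.1 c (hsub hc), k, f, ?_⟩
  exact { hf with mem := fun i hi => Finset.mem_image_of_mem f (Finset.mem_range.mpr hi) }

theorem hexAdj_iff {a b : ℤ × ℤ} : HexAdj a b ↔
    (b.1 - a.1 = 1 ∧ b.2 - a.2 = 0) ∨ (b.1 - a.1 = -1 ∧ b.2 - a.2 = 0) ∨
    (b.1 - a.1 = 0 ∧ b.2 - a.2 = 1) ∨ (b.1 - a.1 = 0 ∧ b.2 - a.2 = -1) ∨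
    (b.1 - a.1 = 1 ∧ b.2 - a.2 = -1) ∨ (b.1 - a.1 = -1 ∧ b.2 - a.2 = 1) := by
  simp [HexAdj, Prod.ext_iff]

/-- `unitTri (true, a, b)` and `unitTri (false, a, b)` are the two unit triangles of the rhombus
with lowest corner `(a, b)`. -/
def unitTri : Bool × ℤ × ℤ → Finset (ℤ × ℤ)
  | (true, a, b) => {(a, b), (a + 1, b), (a, b + 1)}
  | (false, a, b) => {(a + 1, b), (a, b + 1), (a + 1, b + 1)}

noncomputable def triIndices (n : ℕ) : Finset (Bool × ℤ × ℤ) :=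
  Finset.univ ×ˢ Finset.Icc 0 (n : ℤ) ×ˢ Finset.Icc 1 ((n : ℤ) - 1)

theorem card_triIndices (n : ℕ) : (triIndices n).card = 2 * (n + 1) * (n - 1) := by
  simp only [triIndices, Finset.card_product, Int.card_Icc, Finset.card_univ, Fintype.card_bool]
  rw [show ((n : ℤ) + 1 - 0).toNat = n + 1 by omega,
    show ((n : ℤ) - 1 + 1 - 1).toNat = n - 1 by omega, mul_assoc]

theorem unitTri_injective : Function.Injective unitTri := by
  rintro ⟨s, a, b⟩ ⟨t, c, d⟩ h
  rw [Finset.ext_iff] at h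
  have h1 := h (a, b); have h2 := h (a + 1, b); have h3 := h (a, b + 1)
  have h4 := h (c + 1, d); have h5 := h (c, d + 1)
  cases s <;> cases t <;> simp [unitTri, Prod.ext_iff] at h1 h2 h3 h4 h5 ⊢ <;> omega

theorem card_unitTri (x : Bool × ℤ × ℤ) : (unitTri x).card = 3 := by
  obtain ⟨_ | _, a, b⟩ := x <;> simp [unitTri, Finset.card_insert_of_notMem, Prod.ext_iff]

theorem hexAdj_of_mem_unitTri {x : Bool × ℤ × ℤ} {a b : ℤ × ℤ} (ha : a ∈ unitTri x)
    (hb : b ∈ unitTri x) (hab : a ≠ b) : HexAdj a b := by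
  obtain ⟨_ | _, c, d⟩ := x <;>
    simp only [unitTri, Finset.mem_insert, Finset.mem_singleton] at ha hb <;> rcases ha with rfl | rfl | rfl <;> rcases hb with rfl | rfl | rfl <;>
    simp_all [hexAdj_iff]

theorem mem_triIndices_iff {n : ℕ} {x : Bool × ℤ × ℤ} :
    x ∈ triIndices n ↔ ∀ a ∈ unitTri x, OnExtBoard n a := by
  obtain ⟨_ | _, a, b⟩ := x <;> simp [triIndices, unitTri, OnExtBoard] <;> omega

theorem exists_unitTri_eq {a b c : ℤ × ℤ} (hab : HexAdj a b) (hac : HexAdj a c)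
    (hbc : HexAdj b c) : ∃ x, unitTri x = {a, b, c} := by
  rw [hexAdj_iff] at hab hac hbc
  rcases hab with ⟨h1, h2⟩ | ⟨h1, h2⟩ | ⟨h1, h2⟩ | ⟨h1, h2⟩ | ⟨h1, h2⟩ | ⟨h1, h2⟩ <;>
    rcases hbc with ⟨h3, h4⟩ | ⟨h3, h4⟩ | ⟨h3, h4⟩ | ⟨h3, h4⟩ | ⟨h3, h4⟩ | ⟨h3, h4⟩ <;>
    first
    | (exfalso; omega)
    | exact ⟨(true, a.1, a.2), by ext z; simp [unitTri, Prod.ext_iff]; omega⟩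
    | exact ⟨(true, a.1 - 1, a.2), by ext z; simp [unitTri, Prod.ext_iff]; omega⟩
    | exact ⟨(true, a.1, a.2 - 1), by ext z; simp [unitTri, Prod.ext_iff]; omega⟩
    | exact ⟨(false, a.1 - 1, a.2), by ext z; simp [unitTri, Prod.ext_iff]; omega⟩
    | exact ⟨(false, a.1, a.2 - 1), by ext z; simp [unitTri, Prod.ext_iff]; omega⟩
    | exact ⟨(false, a.1 - 1, a.2 - 1), by ext z; simp [unitTri, Prod.ext_iff]; omega⟩

theorem isUnitTriangle_iff {n : ℕ} {T : Finset (ℤ × ℤ)} :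
    IsUnitTriangle n T ↔ ∃ x ∈ triIndices n, unitTri x = T := by
  constructor
  · rintro ⟨hcard, hboard, hadj⟩
    obtain ⟨a, b, c, hab, hac, hbc, rfl⟩ := Finset.card_eq_three.mp hcard
    obtain ⟨x, hx⟩ := exists_unitTri_eq (hadj a (by simp) b (by simp) hab)
      (hadj a (by simp) c (by simp) hac) (hadj b (by simp) c (by simp) hbc)
    exact ⟨x, mem_triIndices_iff.mpr (hx ▸ hboard), hx⟩
  · rintro ⟨x, hx, rfl⟩
    exact ⟨card_unitTri x, mem_triIndices_iff.mp hx, fun a ha b hb => hexAdj_of_mem_unitTri ha hb⟩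

noncomputable def trianglesAt (n : ℕ) (c : ℤ × ℤ) : Finset (Bool × ℤ × ℤ) :=
  (triIndices n).filter (c ∈ unitTri ·)

theorem mem_trianglesAt {n : ℕ} {c : ℤ × ℤ} {s : Bool} {a b : ℤ} :
    (s, a, b) ∈ trianglesAt n c ↔ (0 ≤ a ∧ a ≤ n ∧ 1 ≤ b ∧ b ≤ n - 1) ∧ c ∈ unitTri (s, a, b) := by
  simp [trianglesAt, triIndices, and_assoc]

theorem wastedCount_eq (n : ℕ) (S : Finset (ℤ × ℤ)) :
    wastedCount n S = (triIndices n \ S.biUnion (trianglesAt n)).card := by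
  rw [← Finset.card_image_of_injective _ unitTri_injective, wastedCount, ← Set.ncard_coe_finset]
  congr 1
  ext T
  simp only [Set.mem_ofPred_eq, Finset.coe_image, Set.mem_image, Finset.mem_coe,
    Finset.mem_sdiff, Finset.mem_biUnion, trianglesAt, Finset.mem_filter, isUnitTriangle_iff]
  constructor
  · rintro ⟨⟨x, hx, rfl⟩, hS⟩
    exact ⟨x, ⟨hx, fun ⟨a, ha, _, hax⟩ => hS a hax ha⟩, rfl⟩
  · rintro ⟨x, ⟨hx, hS⟩, rfl⟩
    exact ⟨⟨x, hx, rfl⟩, fun a hax ha => hS ⟨a, ha, hx, hax⟩⟩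

theorem card_trianglesAt {n : ℕ} {c : ℤ × ℤ} (hc : OnBoard n c) :
    (trianglesAt n c).card = (if c.2 = 1 then 0 else 3) + (if c.2 = n then 0 else 3) := by
  obtain ⟨x, y⟩ := c
  obtain ⟨hx1, hxn, hy1, hyn⟩ : 1 ≤ x ∧ x ≤ n ∧ 1 ≤ y ∧ y ≤ n := hc
  have hsplit : trianglesAt n (x, y) =
      (if y = 1 then ∅ else {(true, x, y - 1), (false, x, y - 1), (false, x - 1, y - 1)}) ∪
      (if y = n then ∅ else {(true, x, y), (true, x - 1, y), (false, x - 1, y)}) := by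
    ext ⟨_ | _, a, b⟩ <;> split_ifs <;> simp [mem_trianglesAt, unitTri, Prod.ext_iff] <;> omega
  have hdisj : Disjoint ({(true, x, y - 1), (false, x, y - 1), (false, x - 1, y - 1)} : Finset _)
      {(true, x, y), (true, x - 1, y), (false, x - 1, y)} := by
    simp [Finset.disjoint_left, Prod.ext_iff]; omega
  rw [hsplit, Finset.card_union_of_disjoint (by split_ifs <;> simp [hdisj])]
  split_ifs <;> simp [Finset.card_insert_of_notMem, Prod.ext_iff, eq_comm (a := x)]

-- A horizontal edge in row `1` or row `n` borders only one unit triangle.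
theorem card_trianglesAt_inter {n : ℕ} {a b : ℤ × ℤ} (ha : OnBoard n a) (hb : OnBoard n b)
    (hab : HexAdj a b) (hrow : a.2 = b.2 → a.2 ≠ 1 ∧ a.2 ≠ n) :
    (trianglesAt n a ∩ trianglesAt n b).card = 2 := by
  obtain ⟨x, y⟩ := a
  obtain ⟨hx1, hxn, hy1, hyn⟩ : 1 ≤ x ∧ x ≤ n ∧ 1 ≤ y ∧ y ≤ n := ha
  obtain ⟨x', y'⟩ := b
  obtain ⟨hx1', hxn', hy1', hyn'⟩ : 1 ≤ x' ∧ x' ≤ n ∧ 1 ≤ y' ∧ y' ≤ n := hb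
  replace hrow : y ≠ y' ∨ y ≠ 1 ∧ y ≠ n := not_or_of_imp hrow
  rw [Finset.card_eq_two]
  rcases hexAdj_iff.mp hab with ⟨h1, h2⟩ | ⟨h1, h2⟩ | ⟨h1, h2⟩ | ⟨h1, h2⟩ | ⟨h1, h2⟩ | ⟨h1, h2⟩ <;>
    simp only at h1 h2
  · exact ⟨(true, x, y), (false, x, y - 1), by simp, by
      ext ⟨_ | _, c, d⟩ <;> simp [mem_trianglesAt, unitTri, Prod.ext_iff] <;> omega⟩
  · exact ⟨(true, x - 1, y), (false, x - 1, y - 1), by simp, by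
      ext ⟨_ | _, c, d⟩ <;> simp [mem_trianglesAt, unitTri, Prod.ext_iff] <;> omega⟩
  · exact ⟨(true, x, y), (false, x - 1, y), by simp, by
      ext ⟨_ | _, c, d⟩ <;> simp [mem_trianglesAt, unitTri, Prod.ext_iff] <;> omega⟩
  · exact ⟨(true, x, y - 1), (false, x - 1, y - 1), by simp, by
      ext ⟨_ | _, c, d⟩ <;> simp [mem_trianglesAt, unitTri, Prod.ext_iff] <;> omega⟩
  · exact ⟨(true, x, y - 1), (false, x, y - 1), by simp, by
      ext ⟨_ | _, c, d⟩ <;> simp [mem_trianglesAt, unitTri, Prod.ext_iff] <;> omega⟩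
  · exact ⟨(true, x - 1, y), (false, x - 1, y), by simp, by
      ext ⟨_ | _, c, d⟩ <;> simp [mem_trianglesAt, unitTri, Prod.ext_iff] <;> omega⟩

section ShortestCrossing

variable {n : ℕ} {S : Set (ℤ × ℤ)} {k : ℕ} {f : ℕ → ℤ × ℤ}

theorem card_trianglesAt_of_isShortestCrossing
    (h : IsShortestCrossing HexAdj (·.2 = 1) (·.2 = (n : ℤ)) S k f)
    (hboard : ∀ i < k, OnBoard n (f i)) {i : ℕ} (hi : i < k) :
    (trianglesAt n (f i)).card = (if i = 0 then 0 else 3) + (if i = k - 1 then 0 else 3) := by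
  rw [card_trianglesAt (hboard i hi), if_congr (h.head_iff hi) rfl rfl,
    if_congr (h.last_iff hi) rfl rfl]

theorem card_trianglesAt_inter_succ
    (h : IsShortestCrossing HexAdj (·.2 = 1) (·.2 = (n : ℤ)) S k f)
    (hboard : ∀ i < k, OnBoard n (f i)) {m : ℕ} (hm : m + 1 < k) :
    (trianglesAt n (f m) ∩ trianglesAt n (f (m + 1))).card = 2 := by
  refine card_trianglesAt_inter (hboard m (by omega)) (hboard (m + 1) hm) (h.adj m (by omega))
    fun hrow => ⟨fun h1 => ?_, fun hn => ?_⟩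
  · have := (h.head_iff hm).mp (hrow ▸ h1)
    omega
  · have := (h.last_iff (by omega)).mp hn
    omega

theorem biUnion_range_inter_trianglesAt
    (h : IsShortestCrossing HexAdj (·.2 = 1) (·.2 = (n : ℤ)) S k f) {m : ℕ} (hm : m + 1 < k) :
    ((Finset.range (m + 1)).biUnion fun i => trianglesAt n (f i)) ∩ trianglesAt n (f (m + 1)) =
      trianglesAt n (f m) ∩ trianglesAt n (f (m + 1)) := by
  ext x
  simp only [Finset.mem_inter, Finset.mem_biUnion, Finset.mem_range]
  constructor
  · rintro ⟨⟨j, hj, hjx⟩, hmx⟩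
    obtain rfl | hjm : j = m ∨ j + 1 < m + 1 := by omega
    · exact ⟨hjx, hmx⟩
    have hne : f j ≠ f (m + 1) := fun he => by
      have := h.injOn (Set.mem_Iio.mpr (by omega)) (Set.mem_Iio.mpr hm) he
      omega
    exact absurd (hexAdj_of_mem_unitTri (Finset.mem_filter.mp hjx).2
      (Finset.mem_filter.mp hmx).2 hne) (h.not_adj hjm hm)
  · rintro ⟨hmx, hx⟩
    exact ⟨⟨m, by omega, hmx⟩, hx⟩

theorem card_biUnion_trianglesAt
    (h : IsShortestCrossing HexAdj (·.2 = 1) (·.2 = (n : ℤ)) S k f)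
    (hboard : ∀ i < k, OnBoard n (f i)) :
    ((Finset.range k).biUnion fun i => trianglesAt n (f i)).card + 4 = 4 * k := by
  suffices ∀ m < k, ((Finset.range (m + 1)).biUnion fun i => trianglesAt n (f i)).card + 1 +
      (if m + 1 = k then 3 else 0) = 4 * (m + 1) by
    have := this (k - 1) (by have := h.pos; omega)
    rw [Nat.sub_add_cancel h.pos, if_pos rfl] at this
    omega
  intro m hm
  induction m with
  | zero =>
    have := card_trianglesAt_of_isShortestCrossing h hboard h.pos
    simp only [zero_add, Finset.range_one, Finset.singleton_biUnion] at this ⊢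
    split_ifs at this ⊢ <;> omega
  | succ m ih =>
    have := Finset.card_union_add_card_inter
      ((Finset.range (m + 1)).biUnion fun i => trianglesAt n (f i)) (trianglesAt n (f (m + 1)))
    rw [biUnion_range_inter_trianglesAt h (by omega), card_trianglesAt_inter_succ h hboard hm,
      card_trianglesAt_of_isShortestCrossing h hboard hm, Finset.union_comm,
      ← Finset.biUnion_insert (t := fun i => trianglesAt n (f i)), ← Finset.range_add_one] at this
    have := ih (by omega)
    split_ifs at * <;> omega

end ShortestCrossing

theorem area_identity (n : ℕ) (S : Finset (ℤ × ℤ)) (h : IsWinningPath n S) :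
    4 * S.card + wastedCount n S = 2 * (n + 1) * (n - 1) + 4 := by
  obtain ⟨hboard, k₀, f₀, hf₀⟩ := isWinningConnection_iff.mp h.1
  obtain ⟨k, f, hf⟩ := hf₀.exists_isShortestCrossing
  have htouched : ((Finset.range k).biUnion fun i => trianglesAt n (f i)).card + 4 = 4 * k :=
    card_biUnion_trianglesAt hf fun i hi => hboard _ (hf.mem i hi)
  have hsub : S.biUnion (trianglesAt n) ⊆ triIndices n :=
    Finset.biUnion_subset.mpr fun _ _ => Finset.filter_subset _ _
  have hsplit := Finset.card_sdiff_add_card_eq_card hsub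
  obtain rfl := h.eq_image hf.toIsCrossing
  rw [wastedCount_eq, hf.card_image]
  rw [card_triIndices] at hsplit
  rw [Finset.image_biUnion] at hsplit ⊢
  omega
end

section
/- On an n×n Hex board, no minimal winning path (minimal winning connection) contains a triple of pairwise hex-adjacent cells, i.e., no triangle of the grid lies entirely in the path. -/
lemma hexAdj_symm {a b : ℤ × ℤ} (h : HexAdj a b) : HexAdj b a := by
  simp only [HexAdj, Set.mem_insert_iff, Set.mem_singleton_iff, Prod.mk.injEq] at *
  omega

/-- Property of a witness chain. -/
def ChW (n : ℕ) (S : Finset (ℤ × ℤ)) (r : List (ℤ × ℤ)) : Prop :=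
  ∃ hr : r ≠ [], (∀ c ∈ r, c ∈ S) ∧ r.Chain' HexAdj ∧
    (r.head hr).2 = 1 ∧ (r.getLast hr).2 = (n : ℤ)

lemma shortcut_aux (n : ℕ) (S : Finset (ℤ × ℤ)) (q : List (ℤ × ℤ))
    (hq : ChW n S q)
    (hmin : ∀ r, ChW n S r → q.length ≤ r.length)
    (i m : ℕ) (hi : i < q.length) (him : i + 1 < m) (hm : m ≤ q.length)
    (hadj : ∀ x ∈ q[m]?, HexAdj q[i] x)
    (hend : m = q.length → (q[i]).2 = (n : ℤ)) : False := by
  obtain ⟨hne, hmem, hch, hhd, hlast⟩ := hq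
  set r : List (ℤ × ℤ) := q.take (i+1) ++ q.drop m with hr
  have hrne : r ≠ [] := by
    apply List.ne_nil_of_length_pos
    rw [hr]
    simp only [List.length_append, List.length_take, List.length_drop]
    omega
  have htake_last : (q.take (i+1)).getLast? = some q[i] := by
    rw [List.getLast?_eq_getElem?]
    simp only [List.length_take]
    rw [Nat.min_eq_left (by omega), Nat.add_sub_cancel, List.getElem?_take_of_lt (by omega),
      List.getElem?_eq_getElem hi]
  have hdrop_head : (q.drop m).head? = q[m]? := by
    rw [List.head?_eq_getElem?, List.getElem?_drop]
    simp
  have hrch : r.Chain' HexAdj := by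
    rw [hr, List.Chain', List.isChain_append]
    refine ⟨List.IsChain.take hch _, List.IsChain.drop hch _, ?_⟩
    intro x hx y hy
    rw [htake_last, Option.mem_def, Option.some_inj] at hx
    rw [hdrop_head] at hy
    subst hx
    exact hadj y hy
  have hrhead : (r.head hrne).2 = 1 := by
    have h1 : r.head? = q.head? := by
      rw [hr, List.head?_append]
      have : (q.take (i+1)).head? = q.head? := by
        rw [List.head?_eq_getElem?, List.head?_eq_getElem?, List.getElem?_take_of_lt (by omega)]
      rw [this]
      cases hq : q.head? with
      | none => simp [List.head?_eq_none_iff] at hq; exact absurd hq hne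
      | some a => simp
    have := List.head?_eq_head hne
    rw [List.head?_eq_head hrne, this] at h1
    rw [Option.some_inj] at h1
    rw [h1]; exact hhd
  have hrlast : (r.getLast hrne).2 = (n : ℤ) := by
    rcases Nat.lt_or_ge m q.length with hlt | hge
    · have hdne : q.drop m ≠ [] := by
        simp [List.drop_eq_nil_iff]; omega
      have h1 : r.getLast? = q.getLast? := by
        rw [hr, List.getLast?_append]
        have h2 : (q.drop m).getLast? = q.getLast? := by
          rw [List.getLast?_eq_getElem?, List.getLast?_eq_getElem?, List.getElem?_drop,
            List.length_drop]
          congr 1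
          omega
        rw [h2]
        cases hqq : q.getLast? with
        | none =>
          rw [List.getLast?_eq_getLast hne] at hqq
          simp at hqq
        | some a => simp
      rw [List.getLast?_eq_getLast hrne, List.getLast?_eq_getLast hne, Option.some_inj] at h1
      rw [h1]; exact hlast
    · have hme : m = q.length := le_antisymm hm hge
      have hdnil : q.drop m = [] := by simp [List.drop_eq_nil_iff]; omega
      have h1 : r.getLast? = some q[i] := by
        rw [hr, hdnil, List.append_nil, htake_last]
      rw [List.getLast?_eq_getLast hrne, Option.some_inj] at h1
      rw [h1]; exact hend hme
  have hrmem : ∀ c ∈ r, c ∈ S := by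
    intro c hc
    rw [hr, List.mem_append] at hc
    rcases hc with hc | hc
    · exact hmem c (List.mem_of_mem_take hc)
    · exact hmem c (List.mem_of_mem_drop hc)
  have hlen : r.length < q.length := by
    rw [hr]
    simp [List.length_take, List.length_drop, Nat.min_eq_left (by omega : i+1 ≤ q.length)]
    omega
  exact absurd (hmin r ⟨hrne, hrmem, hrch, hrhead, hrlast⟩) (by omega)

theorem winning_path_no_triangle (n : ℕ) (S : Finset (ℤ × ℤ))
    (h : IsWinningPath n S) :
    ¬ ∃ a b c : ℤ × ℤ, a ∈ S ∧ b ∈ S ∧ c ∈ S ∧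
      a ≠ b ∧ a ≠ c ∧ b ≠ c ∧ HexAdj a b ∧ HexAdj a c ∧ HexAdj b c := by
  rintro ⟨a, b, c, haS, hbS, hcS, hab, hac, hbc, Aab, Aac, Abc⟩
  obtain ⟨⟨hboard, p, hp, hpmem, hpch, hphd, hplast⟩, hminS⟩ := h
  classical
  have hex : ∃ k, ∃ r, ChW n S r ∧ r.length = k :=
    ⟨p.length, p, ⟨hp, hpmem, hpch, hphd, hplast⟩, rfl⟩
  obtain ⟨q, hqW, hqlen⟩ := Nat.find_spec hex
  have hmin : ∀ r, ChW n S r → q.length ≤ r.length := by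
    intro r hrW
    rw [hqlen]
    exact Nat.find_le ⟨r, hrW, rfl⟩
  obtain ⟨hqne, hqmem, hqch, hqhd, hqlast⟩ := hqW
  have hconn : IsWinningConnection n q.toFinset :=
    ⟨fun c hc => hboard c (hqmem c (List.mem_toFinset.1 hc)), q, hqne,
      fun c hc => List.mem_toFinset.2 hc, hqch, hqhd, hqlast⟩
  have hsub : q.toFinset ⊆ S := fun c hc => hqmem c (List.mem_toFinset.1 hc)
  have hSeq : S = q.toFinset := by
    by_contra hne'
    exact hminS _ (Finset.ssubset_iff_subset_ne.2 ⟨hsub, fun e => hne' e.symm⟩) hconn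
  have key : ∀ i j, (hi : i < q.length) → (hj : j < q.length) → i < j →
      HexAdj q[i] q[j] → j = i + 1 := by
    intro i j hi hj hij hadj
    by_contra hne2
    refine shortcut_aux n S q ⟨hqne, hqmem, hqch, hqhd, hqlast⟩ hmin i j hi (by omega)
      (le_of_lt hj) ?_ (fun hm => absurd hm (by omega))
    intro x hx
    rw [List.getElem?_eq_getElem hj, Option.mem_def, Option.some_inj] at hx
    rw [← hx]
    exact hadj
  have pair : ∀ i j, (hi : i < q.length) → (hj : j < q.length) → HexAdj q[i] q[j] →
      q[i] ≠ q[j] → j = i + 1 ∨ i = j + 1 := by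
    intro i j hi hj hadj hne2
    rcases lt_trichotomy i j with h' | h' | h'
    · exact Or.inl (key i j hi hj h' hadj)
    · subst h'
      exact absurd rfl hne2
    · exact Or.inr (key j i hj hi h' (hexAdj_symm hadj))
  rw [hSeq] at haS hbS hcS
  obtain ⟨ia, hia, hga⟩ := List.getElem_of_mem (List.mem_toFinset.1 haS)
  obtain ⟨ib, hib, hgb⟩ := List.getElem_of_mem (List.mem_toFinset.1 hbS)
  obtain ⟨ic, hic, hgc⟩ := List.getElem_of_mem (List.mem_toFinset.1 hcS)
  have p1 := pair ia ib hia hib (by rw [hga, hgb]; exact Aab) (by rw [hga, hgb]; exact hab)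
  have p2 := pair ia ic hia hic (by rw [hga, hgc]; exact Aac) (by rw [hga, hgc]; exact hac)
  have p3 := pair ib ic hib hic (by rw [hgb, hgc]; exact Abc) (by rw [hgb, hgc]; exact hbc)
  omega
end
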